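/- Overfitting lower bound via no-free-lunch: let X be finite with |X| ≥ 2m and consider 0-1 loss. For any learning algorithm A receiving m labeled examples, there exists a function f : X → {0,1} and the uniform distribution D_f on X labeled by f, such that the expected risk of A(S) is at least 1/4, even though min over all functions of the risk is 0. -/

import Mathlib

/-!
Average over all `2 ^ |X|` labelings `f`. If `x` is not in the sample, flipping `f x` changes
neither the labelled sample nor the learner's output, so the learner errs at `x` for exactly half
of the labelings. A sample of `m ≤ |X| / 2` points leaves at least `|X| / 2` points unseen, so the
number of mistakes, averaged over labelings and samples, is at least `|X| / 4`; some labeling is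
at least as bad as the average.
-/

open Finset

section

variable {X : Type*} [Fintype X] [DecidableEq X]

lemma two_mul_card_filter_ne_apply (x : X) (g : (X → Bool) → Bool)
    (hg : ∀ f, g (Function.update f x (!f x)) = g f) :
    2 * #{f | g f ≠ f x} = 2 ^ Fintype.card X := by
  have hflip : ∀ f : X → Bool, Function.update (Function.update f x (!f x)) x
      (!(Function.update f x (!f x)) x) = f := by
    simp
  have hswap : #{f | g f ≠ f x} = #{f | ¬ g f ≠ f x} := by
    refine card_bij' (fun f _ => Function.update f x (!f x))
      (fun f _ => Function.update f x (!f x)) ?_ ?_ (fun f _ => hflip f) (fun f _ => hflip f) <;>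
    · intro f
      simp only [mem_filter, mem_univ, true_and, hg, Function.update_self]
      cases g f <;> cases f x <;> simp
  rw [two_mul]
  nth_rw 2 [hswap]
  rw [card_filter_add_card_filter_not, card_univ, Fintype.card_fun, Fintype.card_bool]

lemma two_pow_card_mul_card_compl_le (S : Finset X)
    (learner : (X → Bool) → X → Bool)
    (hlocal : ∀ f f', (∀ x ∈ S, f x = f' x) → learner f = learner f') :
    2 ^ Fintype.card X * #Sᶜ ≤ 2 * ∑ f, #{x | learner f x ≠ f x} := by
  have hhalf : ∀ x ∈ Sᶜ, 2 * #{f | learner f x ≠ f x} = 2 ^ Fintype.card X := by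
    intro x hx
    refine two_mul_card_filter_ne_apply x (fun f => learner f x) fun f => ?_
    rw [hlocal _ f fun y hy =>
      Function.update_of_ne (ne_of_mem_of_not_mem hy (mem_compl.1 hx)) _ _]
  calc 2 ^ Fintype.card X * #Sᶜ = ∑ x ∈ Sᶜ, 2 * #{f | learner f x ≠ f x} := by
        rw [sum_congr rfl hhalf, sum_const, smul_eq_mul, mul_comm]
    _ ≤ ∑ x, 2 * #{f | learner f x ≠ f x} := sum_le_sum_of_subset (subset_univ _)
    _ = 2 * ∑ f, #{x | learner f x ≠ f x} := by
        simp only [← mul_sum, card_filter]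
        rw [sum_comm]

def numMistakes {m : ℕ} (A : (Fin m → X × Bool) → (X → Bool)) (f : X → Bool)
    (xs : Fin m → X) : ℕ :=
  #{x | A (fun i => (xs i, f (xs i))) x ≠ f x}

lemma card_mul_two_pow_card_le_four_mul_sum_numMistakes {m : ℕ}
    (hcard : 2 * m ≤ Fintype.card X) (A : (Fin m → X × Bool) → (X → Bool)) (xs : Fin m → X) :
    Fintype.card X * 2 ^ Fintype.card X ≤ 4 * ∑ f, numMistakes A f xs := by
  have hlocal : ∀ f f' : X → Bool, (∀ x ∈ univ.image xs, f x = f' x) →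
      A (fun i => (xs i, f (xs i))) = A (fun i => (xs i, f' (xs i))) := by
    intro f f' h
    simp_rw [h _ (mem_image_of_mem xs (mem_univ _))]
  have hunseen : Fintype.card X ≤ 2 * #(univ.image xs)ᶜ := by
    have : #(univ.image xs) ≤ m := card_image_le.trans (by simp)
    rw [card_compl]
    omega
  calc Fintype.card X * 2 ^ Fintype.card X
      ≤ 2 * (2 ^ Fintype.card X * #(univ.image xs)ᶜ) := by
        nlinarith [Nat.one_le_two_pow (n := Fintype.card X)]
    _ ≤ 4 * ∑ f, numMistakes A f xs := by
        have := two_pow_card_mul_card_compl_le _ _ hlocal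
        unfold numMistakes
        omega

lemma exists_card_pow_succ_le_four_mul_sum_numMistakes {m : ℕ}
    (hcard : 2 * m ≤ Fintype.card X) (A : (Fin m → X × Bool) → (X → Bool)) :
    ∃ f : X → Bool, Fintype.card X ^ (m + 1) ≤ 4 * ∑ xs, numMistakes A f xs := by
  obtain ⟨f, -, hf⟩ := exists_le_of_sum_le (s := univ) (f := fun _ => Fintype.card X ^ (m + 1))
    univ_nonempty <| by
      calc ∑ _f : X → Bool, Fintype.card X ^ (m + 1)
          = ∑ _xs : Fin m → X, Fintype.card X * 2 ^ Fintype.card X := by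
            simp only [sum_const, card_univ, Fintype.card_fun, Fintype.card_bool,
              Fintype.card_fin, smul_eq_mul]
            ring
        _ ≤ ∑ xs, 4 * ∑ f, numMistakes A f xs :=
            sum_le_sum fun xs _ => card_mul_two_pow_card_le_four_mul_sum_numMistakes hcard A xs
        _ = ∑ f, 4 * ∑ xs, numMistakes A f xs := by
            simp only [← mul_sum]
            rw [sum_comm]
  exact ⟨f, hf⟩

end

theorem no_free_lunch_quarter_lower_bound_general
    {X : Type*} [Fintype X]
    (m : ℕ) (hm : 0 < m) (hcard : 2 * m ≤ Fintype.card X)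
    (A : (Fin m → X × Bool) → (X → Bool))
    (risk : (X → Bool) → (X → Bool) → ℝ)
    (hrisk : ∀ f h, risk f h =
      ((Finset.univ.filter fun x => h x ≠ f x).card : ℝ) / Fintype.card X) :
    ∃ f : X → Bool,
      (1 / 4 : ℝ) ≤
        (∑ xs : Fin m → X, risk f (A fun i => (xs i, f (xs i)))) /
          ((Fintype.card X : ℝ) ^ m)
      ∧ risk f f = 0 := by
  classical
  have hX : (0 : ℝ) < Fintype.card X := by exact_mod_cast (by omega : 0 < Fintype.card X)
  obtain ⟨f, hf⟩ := exists_card_pow_succ_le_four_mul_sum_numMistakes hcard A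
  refine ⟨f, ?_, by simp [hrisk]⟩
  have hsum : ∑ xs : Fin m → X, risk f (A fun i => (xs i, f (xs i)))
      = (∑ xs, numMistakes A f xs : ℕ) / Fintype.card X := by
    simp only [hrisk, numMistakes, Nat.cast_sum, sum_div]
  have hf' : (Fintype.card X : ℝ) ^ (m + 1) ≤ 4 * (∑ xs, numMistakes A f xs : ℕ) := by
    exact_mod_cast hf
  rw [hsum, div_div, ← pow_succ', le_div_iff₀ (by positivity)]
  linarith

/-- Overfitting lower bound via no-free-lunch: let `X` be finite
with `|X| ≥ 2m` and consider the 0-1 loss. For any learning algorithm `A`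
receiving `m` labeled examples, there exists `f : X → {0,1}` such that, for the
uniform distribution on `X` labeled by `f`, the expected risk of `A(S)` (over
the i.i.d. sample of `m` locations) is at least `1/4`, even though the minimal
risk (attained by `f` itself) is `0`. -/
theorem no_free_lunch_quarter_lower_bound
    {X : Type*} [Fintype X] [DecidableEq X]
    (m : ℕ) (hm : 0 < m) (hcard : 2 * m ≤ Fintype.card X)
    (A : (Fin m → X × Bool) → (X → Bool))
    (risk : (X → Bool) → (X → Bool) → ℝ)
    (hrisk : ∀ f h, risk f h =
      ((Finset.univ.filter fun x => h x ≠ f x).card : ℝ) / Fintype.card X) :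
    ∃ f : X → Bool,
      (1 / 4 : ℝ) ≤
        (∑ xs : Fin m → X, risk f (A fun i => (xs i, f (xs i)))) /
          ((Fintype.card X : ℝ) ^ m)
      ∧ risk f f = 0 :=
  no_free_lunch_quarter_lower_bound_general m hm hcard A risk hrisk
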